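/- Fix Y ∈ ℝ. Let U : ℝ × ℝ → ℝ be C² on the strip ℝ × [Y,∞), subharmonic there (∂²U/∂x² + ∂²U/∂y² ≥ 0 at every point of the strip), 2π-periodic in the first variable (U(x+2π, y) = U(x, y) for all x ∈ ℝ, y ≥ Y), and assume the finite Dirichlet energy condition ∫_Y^∞ ∫₀^{2π} ((∂U/∂x)² + (∂U/∂y)²) dx dy < ∞. Then there exist a constant M and a sequence yₙ → ∞ such that U(0, yₙ) ≤ M for all n; in particular liminf_{y→∞} U(0,y) < ∞. -/

import Mathlib

/-!
Let `m(y) = ∫₀^{2π} U(x, y) dx`. Differentiating under the integral, `m'' = ∫ U_yy ≥ -∫ U_xx = 0`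
by subharmonicity and periodicity, so `m'` is nondecreasing. By Cauchy–Schwarz `m'(y)² ≤ 2π E(y)`,
where `E(y)` is the Dirichlet energy of the horizontal period at height `y`; since `E` is integrable
on `[Y, ∞)`, `m'` can never become positive, so `m` is nonincreasing. On the other hand
`U(0, y) ≤ m(y) / 2π + ∫₀^{2π} |U_x(x, y)| dx ≤ m(y) / 2π + √(2π E(y))`, and integrability of `E`
provides heights `yₙ → ∞` with `E(yₙ) < 1`.
-/

open MeasureTheory Real Set Filter intervalIntegral

/-- The partial derivative of `U : ℝ × ℝ → ℝ` in the first (x) variable. -/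
noncomputable def pderivX (U : ℝ × ℝ → ℝ) (p : ℝ × ℝ) : ℝ :=
  deriv (fun x => U (x, p.2)) p.1

/-- The partial derivative of `U : ℝ × ℝ → ℝ` in the second (y) variable. -/
noncomputable def pderivY (U : ℝ × ℝ → ℝ) (p : ℝ × ℝ) : ℝ :=
  deriv (fun y => U (p.1, y)) p.2

theorem MeasureTheory.IntegrableOn.frequently_atTop_lt {f : ℝ → ℝ} {a δ : ℝ}
    (hf : IntegrableOn f (Ioi a)) (hδ : 0 < δ) : ∃ᶠ y in atTop, f y < δ := by
  intro hge
  obtain ⟨b, hb⟩ := eventually_atTop.1 hge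
  refine (hf.measure_ge_lt_top hδ).ne (top_unique ?_)
  calc ⊤ = volume (Ioi (max a b)) := Real.volume_Ioi.symm
    _ ≤ volume ({y | δ ≤ f y} ∩ Ioi a) := measure_mono fun y hy =>
        ⟨not_lt.1 (hb y (le_max_right a b |>.trans hy.out.le)), (le_max_left a b).trans_lt hy⟩
    _ ≤ _ := Measure.le_restrict_apply _ _

theorem sq_intervalIntegral_le {f : ℝ → ℝ} {a b : ℝ} (hab : a ≤ b)
    (hf : IntervalIntegrable f volume a b)
    (hf2 : IntervalIntegrable (fun x => f x ^ 2) volume a b) :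
    (∫ x in a..b, f x) ^ 2 ≤ (b - a) * ∫ x in a..b, f x ^ 2 := by
  have hquad : ∀ t : ℝ, 0 ≤ (b - a) * (t * t) + (-2 * ∫ x in a..b, f x) * t
      + ∫ x in a..b, f x ^ 2 := by
    intro t
    have h : 0 ≤ ∫ x in a..b, (f x - t) ^ 2 :=
      intervalIntegral.integral_nonneg hab fun x _ => sq_nonneg (f x - t)
    have hexp : (∫ x in a..b, (f x - t) ^ 2)
        = ∫ x in a..b, (f x ^ 2 - (2 * t) * f x + t ^ 2) :=
      intervalIntegral.integral_congr fun x _ => by ring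
    rw [hexp, intervalIntegral.integral_add (hf2.sub (hf.const_mul _)) intervalIntegrable_const,
      intervalIntegral.integral_sub hf2 (hf.const_mul _), intervalIntegral.integral_const_mul,
      intervalIntegral.integral_const, smul_eq_mul] at h
    linarith
  have := discrim_le_zero hquad
  rw [discrim] at this
  linarith

theorem apply_le_add_intervalIntegral_abs_deriv {f : ℝ → ℝ} {a b x : ℝ}
    (hf : Differentiable ℝ f) (hf' : Continuous (deriv f)) (hx : x ∈ Icc a b) :
    f a ≤ f x + ∫ t in a..b, |deriv f t| := by
  have hftc : f x - f a = ∫ t in a..x, deriv f t :=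
    (intervalIntegral.integral_deriv_eq_sub (fun t _ => hf t) (hf'.intervalIntegrable _ _)).symm
  have habs : |∫ t in a..x, deriv f t| ≤ ∫ t in a..x, |deriv f t| :=
    intervalIntegral.abs_integral_le_integral_abs hx.1
  have hmono : (∫ t in a..x, |deriv f t|) ≤ ∫ t in a..b, |deriv f t| :=
    intervalIntegral.integral_mono_interval le_rfl hx.1 hx.2
      (Eventually.of_forall fun t => abs_nonneg _) (hf'.abs.intervalIntegrable _ _)
  linarith [neg_abs_le (∫ t in a..x, deriv f t)]

theorem apply_le_average_add_sqrt_intervalIntegral_deriv_sq {f : ℝ → ℝ} {a b : ℝ} (hab : a < b)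
    (hf : Differentiable ℝ f) (hf' : Continuous (deriv f)) :
    f a ≤ (∫ x in a..b, f x) / (b - a) + √((b - a) * ∫ x in a..b, deriv f x ^ 2) := by
  set V := ∫ t in a..b, |deriv f t|
  have hmean : (b - a) * f a ≤ (∫ x in a..b, f x) + (b - a) * V := by
    have h := intervalIntegral.integral_mono_on hab.le intervalIntegrable_const
      ((hf.continuous.intervalIntegrable (μ := volume) a b).add intervalIntegrable_const)
      fun x hx => apply_le_add_intervalIntegral_abs_deriv hf hf' hx
    rwa [intervalIntegral.integral_add (hf.continuous.intervalIntegrable a b)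
      intervalIntegrable_const, intervalIntegral.integral_const, intervalIntegral.integral_const,
      smul_eq_mul, smul_eq_mul] at h
  have hV : V ≤ √((b - a) * ∫ x in a..b, deriv f x ^ 2) := by
    refine (le_abs_self V).trans (Real.abs_le_sqrt ?_)
    simpa only [sq_abs] using sq_intervalIntegral_le hab.le (hf'.abs.intervalIntegrable a b)
      ((hf'.abs.pow 2).intervalIntegrable a b)
  rw [div_add' _ _ _ (sub_pos.2 hab).ne', le_div_iff₀ (sub_pos.2 hab)]
  linarith [mul_le_mul_of_nonneg_left hV (sub_pos.2 hab).le]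

theorem Function.Periodic.deriv {f : ℝ → ℝ} {T : ℝ} (hf : Periodic f T) :
    Periodic (_root_.deriv f) T :=
  fun x => by rw [← deriv_comp_add_const, hf.funext]

theorem Function.Periodic.intervalIntegral_deriv_eq_zero {f : ℝ → ℝ} {T : ℝ} (hf : Periodic f T)
    (hd : Differentiable ℝ f) (hd' : IntervalIntegrable (_root_.deriv f) volume 0 T) :
    ∫ x in 0..T, _root_.deriv f x = 0 := by
  rw [intervalIntegral.integral_deriv_eq_sub (fun x _ => hd x) hd', ← zero_add T, hf 0, sub_self]

theorem monotoneOn_Ioi_of_hasDerivAt_nonneg {f f' : ℝ → ℝ} {a : ℝ}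
    (hf : ∀ x ∈ Ioi a, HasDerivAt f (f' x) x) (hf' : ∀ x ∈ Ioi a, 0 ≤ f' x) :
    MonotoneOn f (Ioi a) := by
  refine monotoneOn_of_hasDerivWithinAt_nonneg (f' := f') (convex_Ioi a)
    (fun x hx => (hf x hx).continuousAt.continuousWithinAt) ?_ ?_ <;> rw [interior_Ioi]
  exacts [fun x hx => (hf x hx).hasDerivWithinAt, hf']

theorem antitoneOn_Ioi_of_hasDerivAt_nonpos {f f' : ℝ → ℝ} {a : ℝ}
    (hf : ∀ x ∈ Ioi a, HasDerivAt f (f' x) x) (hf' : ∀ x ∈ Ioi a, f' x ≤ 0) :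
    AntitoneOn f (Ioi a) := by
  refine antitoneOn_of_hasDerivWithinAt_nonpos (f' := f') (convex_Ioi a)
    (fun x hx => (hf x hx).continuousAt.continuousWithinAt) ?_ ?_ <;> rw [interior_Ioi]
  exacts [fun x hx => (hf x hx).hasDerivWithinAt, hf']

theorem MonotoneOn.nonpos_of_sq_le_of_integrableOn {g h : ℝ → ℝ} {a : ℝ}
    (hg : MonotoneOn g (Ioi a)) (hh : IntegrableOn h (Ioi a))
    (hgh : ∀ y ∈ Ioi a, g y ^ 2 ≤ h y) {y₀ : ℝ} (hy₀ : y₀ ∈ Ioi a) : g y₀ ≤ 0 := by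
  by_contra! hpos
  obtain ⟨y, hy, hlt⟩ := (hh.frequently_atTop_lt (pow_pos hpos 2)).forall_exists_of_atTop y₀
  have hya : y ∈ Ioi a := lt_of_lt_of_le hy₀ hy
  nlinarith [hg hy₀ hya hy, hgh y hya]

theorem MeasureTheory.IntegrableOn.intervalIntegral_slice {f : ℝ × ℝ → ℝ} {a b : ℝ} {t : Set ℝ}
    (hab : a ≤ b) (hf : IntegrableOn f (Icc a b ×ˢ t)) :
    IntegrableOn (fun y => ∫ x in a..b, f (x, y)) t := by
  rw [IntegrableOn, Measure.volume_eq_prod, ← Measure.prod_restrict] at hf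
  refine hf.integral_prod_right.congr (Eventually.of_forall fun y => ?_)
  dsimp only
  rw [intervalIntegral.integral_of_le hab, ← integral_Icc_eq_integral_Ioc]

section PartialDerivatives

variable {U : ℝ × ℝ → ℝ} {p : ℝ × ℝ}

theorem DifferentiableAt.pderivX_eq_fderiv (h : DifferentiableAt ℝ U p) :
    pderivX U p = fderiv ℝ U p (1, 0) :=
  (h.hasFDerivAt.comp_hasDerivAt p.1 ((hasDerivAt_id p.1).prodMk (hasDerivAt_const _ _))).deriv

theorem DifferentiableAt.pderivY_eq_fderiv (h : DifferentiableAt ℝ U p) :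
    pderivY U p = fderiv ℝ U p (0, 1) :=
  (h.hasFDerivAt.comp_hasDerivAt p.2 ((hasDerivAt_const _ _).prodMk (hasDerivAt_id p.2))).deriv

theorem DifferentiableAt.hasDerivAt_pderivY (h : DifferentiableAt ℝ U p) :
    HasDerivAt (fun y => U (p.1, y)) (pderivY U p) p.2 :=
  h.pderivY_eq_fderiv ▸
    h.hasFDerivAt.comp_hasDerivAt p.2 ((hasDerivAt_const _ _).prodMk (hasDerivAt_id p.2))

theorem ContDiffOn.pderivX {n : WithTop ℕ∞} {S : Set (ℝ × ℝ)} (hU : ContDiffOn ℝ (n + 1) U S)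
    (hS : IsOpen S) : ContDiffOn ℝ n (pderivX U) S :=
  ((hU.fderiv_of_isOpen hS le_rfl).clm_apply contDiffOn_const).congr fun p hp =>
    ((hU.differentiableOn (by simp) p hp).differentiableAt (hS.mem_nhds hp)).pderivX_eq_fderiv

theorem ContDiffOn.pderivY {n : WithTop ℕ∞} {S : Set (ℝ × ℝ)} (hU : ContDiffOn ℝ (n + 1) U S)
    (hS : IsOpen S) : ContDiffOn ℝ n (pderivY U) S :=
  ((hU.fderiv_of_isOpen hS le_rfl).clm_apply contDiffOn_const).congr fun p hp =>
    ((hU.differentiableOn (by simp) p hp).differentiableAt (hS.mem_nhds hp)).pderivY_eq_fderiv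

end PartialDerivatives

section Slices

variable {G : ℝ × ℝ → ℝ} {V : Set ℝ} {y : ℝ}

theorem ContDiffOn.contDiff_slice {n : WithTop ℕ∞} (hG : ContDiffOn ℝ n G (univ ×ˢ V))
    (hy : y ∈ V) : ContDiff ℝ n fun x => G (x, y) :=
  hG.comp_contDiff (contDiff_id.prodMk contDiff_const) fun _ => ⟨trivial, hy⟩

theorem hasDerivAt_intervalIntegral_slice (hG : ContDiffOn ℝ 1 G (univ ×ˢ V)) (hV : IsOpen V)
    (hy : y ∈ V) (a b : ℝ) :
    HasDerivAt (fun y => ∫ x in a..b, G (x, y)) (∫ x in a..b, pderivY G (x, y)) y := by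
  have hG' : ContDiffOn ℝ 0 (pderivY G) (univ ×ˢ V) := hG.pderivY (isOpen_univ.prod hV)
  obtain ⟨ε, hε, hballV⟩ := Metric.isOpen_iff.1 hV y hy
  have hclosedBallV : Metric.closedBall y (ε / 2) ⊆ V :=
    (Metric.closedBall_subset_ball (half_lt_self hε)).trans hballV
  obtain ⟨C, hC⟩ := (isCompact_uIcc.prod (isCompact_closedBall y (ε / 2)))
    |>.exists_bound_of_continuousOn (hG'.continuousOn.mono (prod_mono (subset_univ _) hclosedBallV))
  refine (intervalIntegral.hasDerivAt_integral_of_dominated_loc_of_deriv_le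
    (F := fun y x => G (x, y)) (F' := fun y x => pderivY G (x, y)) (bound := fun _ => C)
    (Metric.ball_mem_nhds y (half_pos hε)) ?_
    ((hG.contDiff_slice hy).continuous.intervalIntegrable _ _)
    (hG'.contDiff_slice hy).continuous.aestronglyMeasurable ?_ intervalIntegrable_const ?_).2
  · filter_upwards [hV.mem_nhds hy] with y' hy'
    exact (hG.contDiff_slice hy').continuous.aestronglyMeasurable
  · refine Eventually.of_forall fun x hx y' hy' => hC (x, y') ⟨uIoc_subset_uIcc hx, ?_⟩
    exact Metric.ball_subset_closedBall hy'
  · refine Eventually.of_forall fun x _ y' hy' => ?_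
    have hmem : (x, y') ∈ univ ×ˢ V :=
      ⟨trivial, hballV (Metric.ball_subset_ball (half_le_self hε.le) hy')⟩
    exact ((hG.differentiableOn one_ne_zero _ hmem).differentiableAt
      ((isOpen_univ.prod hV).mem_nhds hmem)).hasDerivAt_pderivY

end Slices

noncomputable def sliceEnergy (U : ℝ × ℝ → ℝ) (T y : ℝ) : ℝ :=
  ∫ x in 0..T, pderivX U (x, y) ^ 2 + pderivY U (x, y) ^ 2

section SubharmonicStrip

variable {U : ℝ × ℝ → ℝ} {Y T : ℝ}

theorem monotoneOn_intervalIntegral_pderivY (hT : 0 ≤ T) (hU : ContDiffOn ℝ 2 U (univ ×ˢ Ioi Y))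
    (hsub : ∀ p : ℝ × ℝ, Y < p.2 → 0 ≤ pderivX (pderivX U) p + pderivY (pderivY U) p)
    (hper : ∀ y, Y < y → Function.Periodic (fun x => U (x, y)) T) :
    MonotoneOn (fun y => ∫ x in 0..T, pderivY U (x, y)) (Ioi Y) := by
  have hUy : ContDiffOn ℝ 1 (pderivY U) (univ ×ˢ Ioi Y) := hU.pderivY (isOpen_univ.prod isOpen_Ioi)
  have hderiv : ∀ y ∈ Ioi Y, HasDerivAt (fun y => ∫ x in 0..T, pderivY U (x, y))
      (∫ x in 0..T, pderivY (pderivY U) (x, y)) y :=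
    fun y hy => hasDerivAt_intervalIntegral_slice hUy isOpen_Ioi hy 0 T
  have hyy : ∀ y ∈ Ioi Y, 0 ≤ ∫ x in 0..T, pderivY (pderivY U) (x, y) := by
    intro y hy
    have hslice : ContDiff ℝ (1 + 1) fun x => U (x, y) := hU.contDiff_slice hy
    have hUxx : Continuous fun x => pderivX (pderivX U) (x, y) :=
      hslice.deriv'.continuous_deriv le_rfl
    have hUyy : Continuous fun x => pderivY (pderivY U) (x, y) :=
      ((hUy.pderivY (n := 0) (isOpen_univ.prod isOpen_Ioi)).contDiff_slice hy).continuous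
    have hxx : ∫ x in 0..T, pderivX (pderivX U) (x, y) = 0 :=
      (hper y hy).deriv.intervalIntegral_deriv_eq_zero (hslice.deriv'.differentiable one_ne_zero)
        (hUxx.intervalIntegrable _ _)
    have h : 0 ≤ ∫ x in 0..T, (pderivX (pderivX U) (x, y) + pderivY (pderivY U) (x, y)) :=
      intervalIntegral.integral_nonneg hT fun x _ => hsub (x, y) hy
    rwa [intervalIntegral.integral_add (hUxx.intervalIntegrable _ _)
      (hUyy.intervalIntegrable _ _), hxx, zero_add] at h
  exact monotoneOn_Ioi_of_hasDerivAt_nonneg hderiv hyy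

theorem intervalIntegral_pderiv_sq_le_sliceEnergy (hU : ContDiffOn ℝ 1 U (univ ×ˢ Ioi Y))
    (hT : 0 ≤ T) {y : ℝ} (hy : y ∈ Ioi Y) :
    (∫ x in 0..T, pderivX U (x, y) ^ 2) ≤ sliceEnergy U T y ∧
      (∫ x in 0..T, pderivY U (x, y) ^ 2) ≤ sliceEnergy U T y := by
  have hS : IsOpen ((univ : Set ℝ) ×ˢ Ioi Y) := isOpen_univ.prod isOpen_Ioi
  have hUx : Continuous fun x => pderivX U (x, y) ^ 2 :=
    ((hU.pderivX (n := 0) hS).contDiff_slice hy).continuous.pow 2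
  have hUy : Continuous fun x => pderivY U (x, y) ^ 2 :=
    ((hU.pderivY (n := 0) hS).contDiff_slice hy).continuous.pow 2
  have hE : IntervalIntegrable (fun x => pderivX U (x, y) ^ 2 + pderivY U (x, y) ^ 2) volume 0 T :=
    (hUx.add hUy).intervalIntegrable _ _
  exact ⟨intervalIntegral.integral_mono_on hT (hUx.intervalIntegrable _ _) hE fun x _ =>
      le_add_of_nonneg_right (sq_nonneg _),
    intervalIntegral.integral_mono_on hT (hUy.intervalIntegrable _ _) hE fun x _ =>
      le_add_of_nonneg_left (sq_nonneg _)⟩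

theorem antitoneOn_intervalIntegral_of_subharmonic (hT : 0 < T)
    (hU : ContDiffOn ℝ 2 U (univ ×ˢ Ioi Y))
    (hsub : ∀ p : ℝ × ℝ, Y < p.2 → 0 ≤ pderivX (pderivX U) p + pderivY (pderivY U) p)
    (hper : ∀ y, Y < y → Function.Periodic (fun x => U (x, y)) T)
    (hE : IntegrableOn (sliceEnergy U T) (Ioi Y)) :
    AntitoneOn (fun y => ∫ x in 0..T, U (x, y)) (Ioi Y) := by
  have hU1 : ContDiffOn ℝ 1 U (univ ×ˢ Ioi Y) := hU.of_le one_le_two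
  have hflux_sq : ∀ y ∈ Ioi Y, (∫ x in 0..T, pderivY U (x, y)) ^ 2 ≤ T * sliceEnergy U T y := by
    intro y hy
    have hUy : Continuous fun x => pderivY U (x, y) :=
      ((hU1.pderivY (n := 0) (isOpen_univ.prod isOpen_Ioi)).contDiff_slice hy).continuous
    calc (∫ x in 0..T, pderivY U (x, y)) ^ 2 ≤ (T - 0) * ∫ x in 0..T, pderivY U (x, y) ^ 2 :=
          sq_intervalIntegral_le hT.le (hUy.intervalIntegrable _ _)
            ((hUy.pow 2).intervalIntegrable _ _)
      _ ≤ T * sliceEnergy U T y := by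
          rw [sub_zero]
          exact mul_le_mul_of_nonneg_left (intervalIntegral_pderiv_sq_le_sliceEnergy hU1 hT.le hy).2
            hT.le
  have hflux : ∀ y ∈ Ioi Y, ∫ x in 0..T, pderivY U (x, y) ≤ 0 := fun y hy =>
    (monotoneOn_intervalIntegral_pderivY hT.le hU hsub hper).nonpos_of_sq_le_of_integrableOn
      (hE.const_mul T) hflux_sq hy
  exact antitoneOn_Ioi_of_hasDerivAt_nonpos
    (fun y hy => hasDerivAt_intervalIntegral_slice hU1 isOpen_Ioi hy 0 T) hflux

theorem apply_zero_le_average_add_sqrt_sliceEnergy (hU : ContDiffOn ℝ 1 U (univ ×ˢ Ioi Y))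
    (hT : 0 < T) {y : ℝ} (hy : y ∈ Ioi Y) :
    U (0, y) ≤ (∫ x in 0..T, U (x, y)) / T + √(T * sliceEnergy U T y) := by
  have hslice : ContDiff ℝ 1 fun x => U (x, y) := hU.contDiff_slice hy
  have h := apply_le_average_add_sqrt_intervalIntegral_deriv_sq hT
    (hslice.differentiable one_ne_zero) (hslice.continuous_deriv le_rfl)
  rw [sub_zero] at h
  refine h.trans ?_
  gcongr
  exact (intervalIntegral_pderiv_sq_le_sliceEnergy hU hT.le hy).1

end SubharmonicStrip

/-- Analytic heart of Proposition 4.5 (prop:proper-implies-parabolic): if `U` is `C²` on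
the strip `ℝ × [Y, ∞)`, subharmonic there, `2π`-periodic in `x`, and has finite Dirichlet
energy on the strip, then there is a constant `M` and a sequence `yₙ → ∞` along which
`U(0, yₙ) ≤ M`. -/
theorem exists_seq_bounded_of_subharmonic_finite_energy
    (Y : ℝ) (U : ℝ × ℝ → ℝ)
    (hC2 : ContDiffOn ℝ 2 U (Set.univ ×ˢ Set.Ici Y))
    (hsub : ∀ p : ℝ × ℝ, Y ≤ p.2 →
      0 ≤ pderivX (pderivX U) p + pderivY (pderivY U) p)
    (hper : ∀ x y : ℝ, Y ≤ y → U (x + 2 * π, y) = U (x, y))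
    (henergy : IntegrableOn (fun p : ℝ × ℝ => (pderivX U p) ^ 2 + (pderivY U p) ^ 2)
      (Set.Icc 0 (2 * π) ×ˢ Set.Ici Y)) :
    ∃ (M : ℝ) (ys : ℕ → ℝ), Tendsto ys atTop atTop ∧ ∀ n, U (0, ys n) ≤ M := by
  have hT : 0 < 2 * π := by positivity
  have hU : ContDiffOn ℝ 2 U (univ ×ˢ Ioi Y) := hC2.mono (prod_mono subset_rfl Ioi_subset_Ici_self)
  have hE : IntegrableOn (sliceEnergy U (2 * π)) (Ioi Y) :=
    (henergy.intervalIntegral_slice hT.le).mono_set Ioi_subset_Ici_self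
  have hmean : AntitoneOn (fun y => ∫ x in 0..2 * π, U (x, y)) (Ioi Y) :=
    antitoneOn_intervalIntegral_of_subharmonic hT hU (fun p hp => hsub p hp.le)
      (fun y hy x => hper x y hy.le) hE
  choose ys hys_ge hys_lt using fun n : ℕ =>
    (hE.frequently_atTop_lt one_pos).forall_exists_of_atTop (max (n : ℝ) (Y + 1))
  refine ⟨(∫ x in 0..2 * π, U (x, Y + 1)) / (2 * π) + √(2 * π), ys,
    tendsto_atTop_mono (fun n => (le_max_left _ _).trans (hys_ge n)) tendsto_natCast_atTop_atTop,
    fun n => ?_⟩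
  have hy : Y + 1 ≤ ys n := (le_max_right _ _).trans (hys_ge n)
  have hyY : ys n ∈ Ioi Y := (lt_add_one Y).trans_le hy
  calc U (0, ys n) ≤ (∫ x in 0..2 * π, U (x, ys n)) / (2 * π)
        + √(2 * π * sliceEnergy U (2 * π) (ys n)) :=
        apply_zero_le_average_add_sqrt_sliceEnergy (hU.of_le one_le_two) hT hyY
    _ ≤ (∫ x in 0..2 * π, U (x, Y + 1)) / (2 * π) + √(2 * π) := by
        gcongr ?_ / _ + ?_
        · exact hmean (lt_add_one Y) hyY hy
        · exact Real.sqrt_le_sqrt (mul_le_of_le_one_right hT.le (hys_lt n).le)
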